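/- Let (λ_n)_{n≥1} ⊆ [0,1] and nonnegative real sequences (a_n), (b_n) satisfy a_{n+1} ≤ (1-λ_{n+1})·a_n + b_n for all n ≥ 1. If ∑ λ_n diverges and ∑ b_n converges, then lim_{n→∞} a_n = 0. -/

import Mathlib

/-!
Unrolling the recursion from an index `N` gives
`a m ≤ (∏ k ∈ (N, m], (1 - λ k)) * a N + ∑ j ∈ [N, m), b j`.
The product is at most `exp (-∑ k ∈ (N, m], λ k)`, which tends to `0` as `m → ∞` because `∑ λ`
diverges, and the sum is bounded by the tail `∑' k, b (k + N)`, which is small for large `N`.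
-/

open Finset Filter Topology

theorem Real.prod_one_sub_le_exp_neg_sum {ι : Type*} (s : Finset ι) (f : ι → ℝ)
    (hf : ∀ i ∈ s, f i ≤ 1) : ∏ i ∈ s, (1 - f i) ≤ Real.exp (-∑ i ∈ s, f i) := by
  rw [← sum_neg_distrib, Real.exp_sum]
  exact prod_le_prod (fun i hi => sub_nonneg.2 (hf i hi)) fun i _ => Real.one_sub_le_exp_neg _

theorem tendsto_sum_Ioc_atTop_of_le {f : ℕ → ℝ} {M N : ℕ} (hMN : M ≤ N)
    (hf : Tendsto (fun m => ∑ k ∈ Ioc M m, f k) atTop atTop) :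
    Tendsto (fun m => ∑ k ∈ Ioc N m, f k) atTop atTop := by
  refine (tendsto_atTop_add_const_right atTop (-∑ k ∈ Ioc M N, f k) hf).congr' ?_
  filter_upwards [eventually_ge_atTop N] with m hm
  rw [← sum_Ioc_consecutive f hMN hm]
  ring

theorem tendsto_prod_Ioc_one_sub_zero {f : ℕ → ℝ} {N : ℕ} (hf : ∀ k > N, f k ≤ 1)
    (hdiv : Tendsto (fun m => ∑ k ∈ Ioc N m, f k) atTop atTop) :
    Tendsto (fun m => ∏ k ∈ Ioc N m, (1 - f k)) atTop (𝓝 0) := by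
  have hf' : ∀ m, ∀ k ∈ Ioc N m, f k ≤ 1 := fun m k hk => hf k (mem_Ioc.1 hk).1
  refine squeeze_zero (fun m => prod_nonneg fun k hk => sub_nonneg.2 (hf' m k hk))
    (fun m => Real.prod_one_sub_le_exp_neg_sum _ _ (hf' m)) ?_
  exact Real.tendsto_exp_atBot.comp (tendsto_neg_atTop_atBot.comp hdiv)

theorem sum_Ico_le_tsum_nat_add {b : ℕ → ℝ} {N : ℕ} (hb : ∀ j ≥ N, 0 ≤ b j) (hs : Summable b)
    (m : ℕ) : ∑ j ∈ Ico N m, b j ≤ ∑' k, b (k + N) := by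
  rw [sum_Ico_eq_sum_range]
  simp only [add_comm N]
  exact ((summable_nat_add_iff N).2 hs).sum_le_tsum _ fun k _ => hb _ (Nat.le_add_left N k)

theorem le_prod_one_sub_mul_add_sum_of_le {lam a b : ℕ → ℝ} {N : ℕ}
    (hlam : ∀ k > N, lam k ∈ Set.Icc (0 : ℝ) 1) (hb : ∀ j ≥ N, 0 ≤ b j)
    (hrec : ∀ n ≥ N, a (n + 1) ≤ (1 - lam (n + 1)) * a n + b n) :
    ∀ m ≥ N, a m ≤ (∏ k ∈ Ioc N m, (1 - lam k)) * a N + ∑ j ∈ Ico N m, b j := by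
  refine Nat.le_induction (by simp) fun m hm ih => ?_
  obtain ⟨hlam₀, hlam₁⟩ := hlam (m + 1) (Nat.lt_succ_of_le hm)
  have hS : 0 ≤ ∑ j ∈ Ico N m, b j := sum_nonneg fun j hj => hb j (mem_Ico.1 hj).1
  rw [prod_Ioc_succ_top hm, sum_Ico_succ_top hm]
  calc a (m + 1) ≤ (1 - lam (m + 1)) * a m + b m := hrec m hm
    _ ≤ (1 - lam (m + 1)) * ((∏ k ∈ Ioc N m, (1 - lam k)) * a N + ∑ j ∈ Ico N m, b j) + b m := by
      gcongr
    _ ≤ _ := by nlinarith [mul_nonneg hlam₀ hS]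

theorem liu_lemma_qualitative
    (lam a b : ℕ → ℝ)
    (hlam : ∀ n ≥ 1, lam n ∈ Set.Icc (0:ℝ) 1)
    (ha : ∀ n ≥ 1, 0 ≤ a n) (hb : ∀ n ≥ 1, 0 ≤ b n)
    (hrec : ∀ n ≥ 1, a (n + 1) ≤ (1 - lam (n + 1)) * a n + b n)
    (hdiv : Filter.Tendsto (fun m => ∑ i ∈ Finset.Icc 1 m, lam i) Filter.atTop Filter.atTop)
    (hsum : Summable (fun j : ℕ => b (j + 1))) :
    Filter.Tendsto a Filter.atTop (nhds 0) := by
  refine tendsto_order.2 ⟨fun ε hε => (eventually_ge_atTop 1).mono fun n hn =>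
    hε.trans_le (ha n hn), fun ε hε => ?_⟩
  obtain ⟨N, hN, htail⟩ := ((eventually_ge_atTop 1).and
    ((tendsto_sum_nat_add b).eventually (gt_mem_nhds (half_pos hε)))).exists
  have hlamN : ∀ k > N, lam k ∈ Set.Icc (0 : ℝ) 1 := fun k hk => hlam k (by omega)
  have hbN : ∀ j ≥ N, 0 ≤ b j := fun j hj => hb j (hN.trans hj)
  have hprod := tendsto_prod_Ioc_one_sub_zero (fun k hk => (hlamN k hk).2)
    (tendsto_sum_Ioc_atTop_of_le (Nat.zero_le N)
      (by simpa only [← Icc_add_one_left_eq_Ioc, zero_add] using hdiv))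
  have hPa : Tendsto (fun m => (∏ k ∈ Ioc N m, (1 - lam k)) * a N) atTop (𝓝 0) := by
    simpa using hprod.mul_const (a N)
  filter_upwards [eventually_ge_atTop N, hPa.eventually (gt_mem_nhds (half_pos hε))]
    with m hm hPm
  calc a m ≤ (∏ k ∈ Ioc N m, (1 - lam k)) * a N + ∑ j ∈ Ico N m, b j :=
        le_prod_one_sub_mul_add_sum_of_le hlamN hbN (fun n hn => hrec n (hN.trans hn)) m hm
    _ < ε / 2 + ε / 2 := add_lt_add_of_lt_of_le hPm
        ((sum_Ico_le_tsum_nat_add hbN ((summable_nat_add_iff 1).1 hsum) m).trans htail.le)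
    _ = ε := add_halves ε
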